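/- Let (N,m0,mf) be a net system, with N a labeled open Petri net. Suppose t is a transition and σ a finite sequence of transitions such that for every transition t' occurring in σ, the preset •t' is disjoint from •t ∪ t•. Then for every marking m reachable from m0 in which t is enabled and from which σ is executable, there is a marking m' such that for every interleaving σ' of ⟨t⟩ and σ, m →σ' m'. -/

import Mathlib

namespace PortNets

/-- Direction of communication of a transition: send, receive, or internal (τ). -/
inductive Dir : Type
  | send | receive | tau
deriving DecidableEq

/-- Preset of a node `x` with respect to a flow relation `F`. -/
def pre {Node : Type} (F : Set (Node × Node)) (x : Node) : Set Node := {y | (y, x) ∈ F}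

/-- Postset of a node `x` with respect to a flow relation `F`. -/
def post {Node : Type} (F : Set (Node × Node)) (x : Node) : Set Node := {y | (x, y) ∈ F}

/-- Raw data of an open Petri net (with labels): internal places `P`, input places `I`,
output places `O`, transitions `T`, flow `F`, initial and final places, labeling `μ`. -/
structure OPN (Node L : Type) where
  P : Set Node
  I : Set Node
  O : Set Node
  T : Set Node
  F : Set (Node × Node)
  init : Set Node
  fin : Set Node
  μ : Node → L

variable {Node L : Type}

/-- All places of an OPN. -/
def OPN.places (N : OPN Node L) : Set Node := N.P ∪ N.I ∪ N.O

/-- All nodes of an OPN. -/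
def OPN.nodes (N : OPN Node L) : Set Node := N.places ∪ N.T

/-- Structural requirements of an open Petri net. -/
structure IsOPN (N : OPN Node L) : Prop where
  disjPI : N.P ∩ N.I = ∅
  disjPO : N.P ∩ N.O = ∅
  disjIO : N.I ∩ N.O = ∅
  disjPT : N.places ∩ N.T = ∅
  flow_sub : N.F ⊆ (N.places ×ˢ N.T) ∪ (N.T ×ˢ N.places)
  no_pre_I : ∀ x ∈ N.I, pre N.F x = ∅
  no_post_O : ∀ x ∈ N.O, post N.F x = ∅
  not_both : ∀ t ∈ N.T, ¬((pre N.F t ∩ N.I).Nonempty ∧ (post N.F t ∩ N.O).Nonempty)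
  init_sub : N.init ⊆ N.P
  fin_sub : N.fin ⊆ N.P

open Classical in
noncomputable def dir (N : OPN Node L) (t : Node) : Dir :=
  if (post N.F t ∩ N.O).Nonempty then Dir.send
  else if (pre N.F t ∩ N.I).Nonempty then Dir.receive
  else Dir.tau

open Classical in
noncomputable def fireAt (F : Set (Node × Node)) (m : Node → ℕ) (t : Node) : Node → ℕ :=
  fun p => m p - (if (p, t) ∈ F then 1 else 0) + (if (t, p) ∈ F then 1 else 0)

/-- `Fires T F m t m'`: transition `t` is enabled in marking `m` and firing it yields `m'`. -/
def Fires (T : Set Node) (F : Set (Node × Node)) (m : Node → ℕ) (t : Node)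
    (m' : Node → ℕ) : Prop :=
  t ∈ T ∧ (∀ p, (p, t) ∈ F → 1 ≤ m p) ∧ m' = fireAt F m t

/-- Firing a finite sequence of transitions. -/
inductive FireSeq (T : Set Node) (F : Set (Node × Node)) :
    (Node → ℕ) → List Node → (Node → ℕ) → Prop
  | nil (m : Node → ℕ) : FireSeq T F m [] m
  | cons {m m' m'' : Node → ℕ} {t : Node} {σ : List Node} :
      Fires T F m t m' → FireSeq T F m' σ m'' → FireSeq T F m (t :: σ) m''

/-- Reachability of markings. -/
def Reach (T : Set Node) (F : Set (Node × Node)) (m m' : Node → ℕ) : Prop :=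
  ∃ σ : List Node, FireSeq T F m σ m'

/-- Weak termination: from every marking reachable from `m0`, the marking `mf` is reachable. -/
def WeaklyTerminates (T : Set Node) (F : Set (Node × Node)) (m0 mf : Node → ℕ) : Prop :=
  ∀ m, Reach T F m0 m → Reach T F m mf

/-- The marking putting one token on each element of a set of places. -/
noncomputable def mark (s : Set Node) : Node → ℕ := s.indicator fun _ => 1

/-- Flow relation of the skeleton: all arcs not adjacent to interface places. -/
def skF (N : OPN Node L) : Set (Node × Node) :=
  {x ∈ N.F | x.1 ∉ N.I ∪ N.O ∧ x.2 ∉ N.I ∪ N.O}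

/-- The skeleton is a state machine: each transition has at most one place in its
preset and at most one in its postset. -/
def IsSM (N : OPN Node L) : Prop :=
  ∀ t ∈ N.T, (pre (skF N) t).Subsingleton ∧ (post (skF N) t).Subsingleton

/-- `x` lies on a path from `i` to `f` w.r.t. flow `F`. -/
def OnPath (F : Set (Node × Node)) (i f x : Node) : Prop :=
  ∃ l : List Node, l ≠ [] ∧ List.Chain' (fun a b => (a, b) ∈ F) l ∧
    l.head? = some i ∧ l.getLast? = some f ∧ x ∈ l

/-- Workflow net (with places `P`, transitions `T`, flow `F`): `i` is the unique place with
empty preset, `f` the unique place with empty postset, and every node is on a path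
from `i` to `f`. -/
def IsWFNOn (P T : Set Node) (F : Set (Node × Node)) (i f : Node) : Prop :=
  i ∈ P ∧ f ∈ P ∧ pre F i = ∅ ∧ post F f = ∅ ∧
    (∀ p ∈ P, pre F p = ∅ → p = i) ∧
    (∀ p ∈ P, post F p = ∅ → p = f) ∧
    (∀ x ∈ P ∪ T, OnPath F i f x)

/-- Transition `t` is connected (by an arc, in either direction) to node `x`. -/
def connected (N : OPN Node L) (t x : Node) : Prop := (x, t) ∈ N.F ∨ (t, x) ∈ N.F

/-- A labeled portnet: an OPN whose skeleton is a state-machine workflow net, with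
singleton `init` and `fin`, every transition connected to exactly one interface place,
transitions sharing an interface place sharing a label, and transitions sharing a
label sharing their interface place connections. -/
structure IsPortnet (N : OPN Node L) : Prop where
  isOPN : IsOPN N
  isSM : IsSM N
  init_single : ∃ i, N.init = {i}
  fin_single : ∃ f, N.fin = {f}
  isWFN : ∀ i f, N.init = {i} → N.fin = {f} → IsWFNOn N.P N.T (skF N) i f
  one_iface : ∀ t ∈ N.T, ∃! x, x ∈ N.I ∪ N.O ∧ connected N t x
  same_iface_label : ∀ x ∈ N.I ∪ N.O, ∀ t t', t ∈ N.T → t' ∈ N.T →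
    connected N t x → connected N t' x → N.μ t = N.μ t'
  same_label_iface : ∀ t ∈ N.T, ∀ t' ∈ N.T, N.μ t = N.μ t' →
    ∀ x ∈ N.I ∪ N.O, (connected N t x ↔ connected N t' x)

/-- Observable choices: distinct transitions in the postset of a place have distinct labels. -/
def ObservableChoices (N : OPN Node L) : Prop :=
  ∀ p ∈ N.P, ∀ t ∈ post N.F p, ∀ t' ∈ post N.F p, t ≠ t' → N.μ t ≠ N.μ t'

/-- Choice property: all transitions in the postset of a place have the same direction. -/
def ChoiceProp (N : OPN Node L) : Prop :=
  ∀ p ∈ N.P, ∀ t ∈ post N.F p, ∀ t' ∈ post N.F p, dir N t = dir N t'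

/-- Diamond property. -/
def DiamondProp (N : OPN Node L) : Prop :=
  ∀ p ∈ N.P, ∀ t ∈ post N.F p, ∀ t' ∈ post N.F p, dir N t ≠ dir N t' →
    ∀ q ∈ post (skF N) t, ∀ q' ∈ post (skF N) t',
      ∃ u ∈ post (skF N) q, ∃ u' ∈ post (skF N) q',
        (post (skF N) u ∩ post (skF N) u').Nonempty ∧
        N.μ t = N.μ u' ∧ N.μ t' = N.μ u

/-- Loop property. -/
def LoopProp (N : OPN Node L) : Prop :=
  ∀ p ∈ N.P, ∀ t ∈ post N.F p, ∀ t' ∈ post N.F p, t ≠ t' → dir N t = dir N t' →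
    ∀ (l : List Node) (t'' : Node),
      List.Chain' (fun a b => (a, b) ∈ N.F) (p :: t :: (l ++ [t''])) →
      t'' ∈ N.T → N.μ t'' = N.μ t' →
      (∀ u ∈ l, u ∈ N.T → N.μ u ≠ N.μ t') →
      ∃ v ∈ t :: (l ++ [t'']), v ∈ N.T ∧ dir N v ≠ dir N t

/-- Well-formed labeled portnet. -/
def WellFormed (N : OPN Node L) : Prop :=
  IsPortnet N ∧ ObservableChoices N ∧ DiamondProp N ∧ LoopProp N

/-- `(M, φ)` is a partial mirror of the labeled portnet `N`. -/
structure IsPartialMirror (N M : OPN Node L) (φ : Node → Node) : Prop where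
  portN : IsPortnet N
  portM : IsPortnet M
  inj : Set.InjOn φ M.nodes
  mapsP : ∀ x ∈ M.P, φ x ∈ N.P
  mapsT : ∀ x ∈ M.T, φ x ∈ N.T
  mapsI : ∀ x ∈ M.I, φ x ∈ N.O
  mapsO : ∀ x ∈ M.O, φ x ∈ N.I
  flow_same : ∀ x y, (x, y) ∈ M.F → x ∉ M.I → y ∉ M.O → (φ x, φ y) ∈ N.F
  flow_rev : ∀ x y, (x, y) ∈ M.F → (x ∈ M.I ∨ y ∈ M.O) → (φ y, φ x) ∈ N.F
  init_eq : φ '' M.init = N.init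
  fin_eq : φ '' M.fin = N.fin
  lab : ∀ t ∈ M.T, M.μ t = N.μ (φ t)
  send_cover : ∀ p ∈ M.P, ∀ t, (φ p, t) ∈ N.F → dir N t = Dir.send →
    ∃ t', (p, t') ∈ M.F ∧ φ t' = t

/-- Composability of two OPNs. -/
def Composable (N M : OPN Node L) : Prop :=
  (N.nodes ∩ M.nodes = (N.I ∪ N.O) ∩ (M.I ∪ M.O)) ∧
  (((N.I ∩ M.O) ∪ (M.I ∩ N.O)).Nonempty →
    N.O ⊆ M.I ∧ M.O ⊆ N.I ∧ N.I ∩ M.I = ∅ ∧ N.O ∩ M.O = ∅)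

open Classical in
noncomputable def compose2 (N M : OPN Node L) : OPN Node L where
  P := N.P ∪ M.P ∪ ((N.I ∪ M.I) ∩ (N.O ∪ M.O))
  I := (N.I ∪ M.I) \ (N.O ∪ M.O)
  O := (N.O ∪ M.O) \ (N.I ∪ M.I)
  T := N.T ∪ M.T
  F := N.F ∪ M.F
  init := N.init ∪ M.init
  fin := N.fin ∪ M.fin
  μ := fun x => if x ∈ N.T then N.μ x else M.μ x

end PortNets


/-!
The transitions of `σ` consume no token from `•t ∪ t•`, so each of them commutes with `t`
and none of them can disable `t`. Moving `t` to the end of an interleaving step by step,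
every interleaving of `⟨t⟩` and `σ` leads to the marking reached by `σ` followed by `t`.
-/

namespace PortNets

variable {Node : Type} {T : Set Node} {F : Set (Node × Node)} {m m₂ : Node → ℕ}
  {t t' p : Node} {σ τ : List Node}

def Enabled (F : Set (Node × Node)) (m : Node → ℕ) (t : Node) : Prop :=
  ∀ p, (p, t) ∈ F → 1 ≤ m p

theorem fireAt_apply_of_not_mem (hpre : p ∉ pre F t) (hpost : p ∉ post F t) :
    fireAt F m t p = m p := by
  simp_all [fireAt, pre, post]

theorem le_fireAt_apply (hpre : p ∉ pre F t) : m p ≤ fireAt F m t p := by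
  simp_all [fireAt, pre]

theorem Enabled.fireAt (hen : Enabled F m t) (hd : ∀ p ∈ pre F t', p ∉ pre F t) :
    Enabled F (fireAt F m t') t :=
  fun p hp => (hen p hp).trans (le_fireAt_apply fun hp' => hd p hp' hp)

theorem fireAt_comm (hd : ∀ p ∈ pre F t', p ∉ pre F t ∪ post F t) (hen : Enabled F m t) :
    fireAt F (fireAt F m t) t' = fireAt F (fireAt F m t') t := by
  funext p
  have hp := hd p
  have hm := hen p
  -- outside `•t'`, firing `t'` only adds tokens, so no truncated subtraction interferes
  simp only [fireAt, pre, post, Set.mem_ofPred_eq, Set.mem_union, not_or] at hp hm ⊢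
  split_ifs <;> simp_all

theorem FireSeq.append (h₁ : FireSeq T F m σ m₂) {m₃ : Node → ℕ} (h₂ : FireSeq T F m₂ τ m₃) :
    FireSeq T F m (σ ++ τ) m₃ := by
  induction h₁ with
  | nil => exact h₂
  | cons hf _ ih => exact .cons hf (ih h₂)

theorem FireSeq.of_append {m₃ : Node → ℕ} (h : FireSeq T F m (σ ++ τ) m₃) :
    ∃ m₂, FireSeq T F m σ m₂ ∧ FireSeq T F m₂ τ m₃ := by
  induction σ generalizing m with
  | nil => exact ⟨m, .nil m, h⟩
  | cons t' σ ih =>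
    cases h with
    | cons hf hs =>
      obtain ⟨m₂, h₁, h₂⟩ := ih hs
      exact ⟨m₂, .cons hf h₁, h₂⟩

theorem FireSeq.fireAt_of_disjoint (hσ : FireSeq T F m σ m₂)
    (hd : ∀ t' ∈ σ, ∀ p ∈ pre F t', p ∉ pre F t ∪ post F t) (hen : Enabled F m t) :
    Enabled F m₂ t ∧ FireSeq T F (fireAt F m t) σ (fireAt F m₂ t) := by
  induction hσ with
  | nil => exact ⟨hen, .nil _⟩
  | @cons m m' m'' t' σ hf _ ih =>
    obtain ⟨ht', hen', rfl⟩ := hf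
    have hd' := hd t' List.mem_cons_self
    obtain ⟨hen₂, hσ'⟩ :=
      ih (fun u hu => hd u (List.mem_cons_of_mem _ hu))
        (hen.fireAt fun p hp ht => hd' p hp (Or.inl ht))
    refine ⟨hen₂, .cons ⟨ht', fun p hp => ?_, (fireAt_comm hd' hen).symm⟩ hσ'⟩
    have hp' : p ∉ pre F t ∧ p ∉ post F t := by simpa using hd' p hp
    rw [fireAt_apply_of_not_mem hp'.1 hp'.2]
    exact hen' p hp

theorem shuffle_general {Node L : Type} (W : OPN Node L)
    (m0 : Node → ℕ) (t : Node) (σ : List Node)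
    (hdisj : ∀ t' ∈ σ, ∀ p, p ∈ pre W.F t' → p ∉ pre W.F t ∪ post W.F t) :
    ∀ m, Reach W.T W.F m0 m →
      (∃ m₁, Fires W.T W.F m t m₁) → (∃ m₂, FireSeq W.T W.F m σ m₂) →
      ∃ m', ∀ α' α'', σ = α' ++ α'' → FireSeq W.T W.F m (α' ++ t :: α'') m' := by
  rintro m - ⟨-, ht, hen, -⟩ ⟨m₂, hσ⟩
  refine ⟨fireAt W.F m₂ t, fun α' α'' hsplit => ?_⟩
  subst hsplit
  obtain ⟨mi, hα', hα''⟩ := hσ.of_append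
  obtain ⟨hen_mi, -⟩ :=
    hα'.fireAt_of_disjoint (fun t' h => hdisj t' (List.mem_append_left _ h)) hen
  have hα''_after_t :=
    (hα''.fireAt_of_disjoint (fun t' h => hdisj t' (List.mem_append_right _ h)) hen_mi).2
  exact hα'.append (.cons ⟨ht, hen_mi, rfl⟩ hα''_after_t)

/-- shuffle lemma: if the preset of every transition in `σ` is disjoint from
`•t ∪ t•`, then from any reachable marking `m` in which `t` is enabled and from which `σ`
is executable, all interleavings of `⟨t⟩` and `σ` are executable and lead to the same
marking. -/
theorem shuffle {Node L : Type} (W : OPN Node L) (hW : IsOPN W)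
    (m0 mf : Node → ℕ) (t : Node) (σ : List Node)
    (hdisj : ∀ t' ∈ σ, ∀ p, p ∈ pre W.F t' → p ∉ pre W.F t ∪ post W.F t) :
    ∀ m, Reach W.T W.F m0 m →
      (∃ m₁, Fires W.T W.F m t m₁) → (∃ m₂, FireSeq W.T W.F m σ m₂) →
      ∃ m', ∀ α' α'', σ = α' ++ α'' → FireSeq W.T W.F m (α' ++ t :: α'') m' :=
  shuffle_general W m0 t σ hdisj

end PortNets
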